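/- Suppose the conditional law of the state is constant: p_t = p ∈ ΔΩ for all t (for instance, the states X_t are i.i.d. with law p independent of the predictable forecasts f_t). Let ε ≥ 0 and suppose the play is almost surely ε-calibrated: limsup_{T→∞} Σ_{f ∈ F} (|N_T[f]|/T) ‖ω̄_T[f] − f‖ ≤ ε almost surely. Then, almost surely, for every forecast f ∈ F, limsup_{T→∞} (|N_T[f]|/T) · ‖f − p‖ ≤ ε; in particular, every forecast at Euclidean distance more than ε from p is used with asymptotic frequency zero. -/

import Mathlib

open Filter MeasureTheory

noncomputable section

variable {Ω : Type*} [Fintype Ω] [DecidableEq Ω]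

/-- The Dirac point mass `δ_ω` as an element of the probability simplex in `ℝ^Ω`. -/
def diracVec (ω : Ω) : EuclideanSpace ℝ Ω := WithLp.toLp 2 fun a => if a = ω then 1 else 0

/-!
Given the past, `δ_{X_t} - p` has conditional mean zero, and so does its product with the
predictable indicator `1{f_t = q}`. Each coordinate of `T⁻¹ ∑_{t ∈ N_T[q]} (δ_{X_t} - p)` is
therefore an average of bounded martingale differences and tends to `0` almost surely: the second
moment of the partial sums grows linearly, so the squared averages along `T = k²` are summable in
expectation, and between consecutive squares the averages move by `O(1/k)`. On the other hand
`(|N_T[q]|/T) (q - p) = T⁻¹ ∑_{N_T[q]} (δ_{X_t} - p) - T⁻¹ ∑_{N_T[q]} (δ_{X_t} - q)`, and the norm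
of the last sum is exactly the `q`-term of the calibration score.
-/

open Finset Topology

theorem tendsto_sum_range_div_of_tendsto_sq {Y : ℕ → ℝ} {C : ℝ} (hY : ∀ t, |Y t| ≤ C)
    (hsq : Tendsto (fun k : ℕ => (∑ t ∈ range (k ^ 2), Y t) / (k ^ 2 : ℕ)) atTop (𝓝 0)) :
    Tendsto (fun n : ℕ => (∑ t ∈ range n, Y t) / n) atTop (𝓝 0) := by
  have hC : 0 ≤ C := (abs_nonneg _).trans (hY 0)
  have hbound : ∀ n : ℕ, ‖(∑ t ∈ range n, Y t) / n‖ ≤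
      |(∑ t ∈ range (n.sqrt ^ 2), Y t) / (n.sqrt ^ 2 : ℕ)| + 2 * C / n.sqrt := by
    intro n
    rcases Nat.eq_zero_or_pos n with rfl | hn
    · simp
    set k := n.sqrt
    have hk : 0 < k := Nat.sqrt_pos.2 hn
    have hkn : k ^ 2 ≤ n := Nat.sqrt_le' n
    have hnk : n ≤ k ^ 2 + 2 * k := by have := Nat.lt_succ_sqrt' n; nlinarith
    have htail : |∑ t ∈ range n, Y t - ∑ t ∈ range (k ^ 2), Y t| ≤ C * (2 * k) := by
      rw [← sum_Ico_eq_sub _ hkn]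
      calc _ ≤ ∑ t ∈ Ico (k ^ 2) n, |Y t| := abs_sum_le_sum_abs _ _
        _ ≤ ∑ t ∈ Ico (k ^ 2) n, C := sum_le_sum fun t _ => hY t
        _ = C * (n - k ^ 2 : ℕ) := by simp [mul_comm]
        _ ≤ C * (2 * k) := by gcongr; exact_mod_cast (by omega : n - k ^ 2 ≤ 2 * k)
    have hk2 : (0 : ℝ) < (k ^ 2 : ℕ) := by positivity
    have hkn' : ((k ^ 2 : ℕ) : ℝ) ≤ n := by exact_mod_cast hkn
    rw [Real.norm_eq_abs, abs_div, abs_div, Nat.abs_cast, Nat.abs_cast]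
    calc |∑ t ∈ range n, Y t| / n
        ≤ (|∑ t ∈ range (k ^ 2), Y t| + C * (2 * k)) / (k ^ 2 : ℕ) := by
          gcongr
          linarith [abs_sub_abs_le_abs_sub (∑ t ∈ range n, Y t) (∑ t ∈ range (k ^ 2), Y t)]
      _ = _ := by field_simp; push_cast; ring
  have hsqrt : Tendsto Nat.sqrt atTop atTop :=
    tendsto_atTop_atTop.2 fun b => ⟨b ^ 2, fun n hn => Nat.le_sqrt'.2 hn⟩
  have hrhs := (hsq.abs.add (tendsto_const_div_atTop_nhds_zero_nat (2 * C))).comp hsqrt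
  rw [abs_zero, add_zero] at hrhs
  exact squeeze_zero_norm hbound hrhs

theorem integral_mul_eq_zero_of_condExp_eq_zero {Ξ : Type*} {m m0 : MeasurableSpace Ξ}
    {μ : Measure Ξ} [IsFiniteMeasure μ] (hm : m ≤ m0) {g h : Ξ → ℝ}
    (hg : StronglyMeasurable[m] g) (hgh : Integrable (g * h) μ) (hh : Integrable h μ)
    (hc : μ[h | m] =ᵐ[μ] 0) : ∫ ξ, g ξ * h ξ ∂μ = 0 := by
  have hgh0 : μ[g * h | m] =ᵐ[μ] 0 := by
    filter_upwards [condExp_mul_of_stronglyMeasurable_left hg hgh hh, hc] with ξ h1 h2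
    simp [h1, h2]
  calc ∫ ξ, g ξ * h ξ ∂μ = ∫ ξ, (μ[g * h | m]) ξ ∂μ := (integral_condExp hm).symm
    _ = 0 := by rw [integral_congr_ae hgh0]; simp

theorem ae_tendsto_zero_of_summable_integral {Ξ : Type*} {m0 : MeasurableSpace Ξ}
    {μ : Measure Ξ} {Z : ℕ → Ξ → ℝ} (hZ : ∀ k ξ, 0 ≤ Z k ξ) (hZint : ∀ k, Integrable (Z k) μ)
    (hsum : Summable fun k => ∫ ξ, Z k ξ ∂μ) :
    ∀ᵐ ξ ∂μ, Tendsto (fun k => Z k ξ) atTop (𝓝 0) := by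
  have hlint : ∫⁻ ξ, ∑' k, ENNReal.ofReal (Z k ξ) ∂μ ≠ ⊤ := by
    rw [lintegral_tsum fun k => (hZint k).aemeasurable.ennreal_ofReal]
    simp_rw [← ofReal_integral_eq_lintegral_ofReal (hZint _) (ae_of_all _ (hZ _))]
    rw [← ENNReal.ofReal_tsum_of_nonneg (fun k => integral_nonneg (hZ k)) hsum]
    exact ENNReal.ofReal_ne_top
  filter_upwards [ae_lt_top' (AEMeasurable.tsum fun k => (hZint k).aemeasurable.ennreal_ofReal)
    hlint] with ξ hξ
  simpa [Function.comp_def, ENNReal.toReal_ofReal (hZ _ ξ)] using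
    (ENNReal.tendsto_toReal ENNReal.zero_ne_top).comp
      (ENNReal.tendsto_atTop_zero_of_tsum_ne_top hξ.ne)

section MartingaleDifference

variable {Ξ : Type*} {m0 : MeasurableSpace Ξ} {μ : Measure Ξ}
  {𝒢 : Filtration ℕ m0} {Y : ℕ → Ξ → ℝ} {C : ℝ}

theorem integrable_of_abs_le [IsFiniteMeasure μ] {f : Ξ → ℝ} (hf : Measurable f)
    (hb : ∀ ξ, |f ξ| ≤ C) : Integrable f μ :=
  .of_bound hf.aestronglyMeasurable C (ae_of_all _ hb)

theorem abs_sum_range_le (hbdd : ∀ t ξ, |Y t ξ| ≤ C) (n : ℕ) (ξ : Ξ) :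
    |∑ t ∈ range n, Y t ξ| ≤ n * C :=
  ((abs_sum_le_sum_abs _ _).trans (sum_le_sum fun t _ => hbdd t ξ)).trans_eq (by simp)

theorem integrable_sq_sum_range [IsFiniteMeasure μ] (hY : ∀ t, Measurable (Y t))
    (hbdd : ∀ t ξ, |Y t ξ| ≤ C) (n : ℕ) :
    Integrable (fun ξ => (∑ t ∈ range n, Y t ξ) ^ 2) μ :=
  integrable_of_abs_le ((Finset.measurable_fun_sum _ fun t _ => hY t).pow_const 2) fun ξ => by
    rw [abs_pow]; exact pow_le_pow_left₀ (abs_nonneg _) (abs_sum_range_le hbdd n ξ) 2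

theorem integral_sq_sum_range_le [IsProbabilityMeasure μ]
    (hY : ∀ t, Measurable[𝒢 (t + 1)] (Y t)) (hbdd : ∀ t ξ, |Y t ξ| ≤ C)
    (hc : ∀ t, μ[Y t | 𝒢 t] =ᵐ[μ] 0) (n : ℕ) :
    ∫ ξ, (∑ t ∈ range n, Y t ξ) ^ 2 ∂μ ≤ n * C ^ 2 := by
  have hYm : ∀ t, Measurable (Y t) := fun t => (hY t).mono (𝒢.le _) le_rfl
  induction n with
  | zero => simp
  | succ n ih =>
    set S : Ξ → ℝ := fun ξ => ∑ t ∈ range n, Y t ξ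
    have hSm : Measurable[𝒢 n] S := Finset.measurable_fun_sum _ fun t ht =>
      (hY t).mono (𝒢.mono (mem_range.1 ht)) le_rfl
    have hYint : Integrable (Y n) μ := integrable_of_abs_le (hYm n) (hbdd n)
    have hY2 : Integrable (fun ξ => Y n ξ ^ 2) μ := integrable_of_abs_le ((hYm n).pow_const 2)
      fun ξ => by rw [abs_pow]; exact pow_le_pow_left₀ (abs_nonneg _) (hbdd n ξ) 2
    have hSY : Integrable (fun ξ => S ξ * Y n ξ) μ :=
      hYint.bdd_mul (c := n * C) (hSm.mono (𝒢.le _) le_rfl).aestronglyMeasurable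
        (ae_of_all _ (abs_sum_range_le hbdd n))
    have hcross : ∫ ξ, S ξ * Y n ξ ∂μ = 0 :=
      integral_mul_eq_zero_of_condExp_eq_zero (𝒢.le n) hSm.stronglyMeasurable hSY hYint (hc n)
    have hY2le : ∫ ξ, Y n ξ ^ 2 ∂μ ≤ C ^ 2 := by
      calc ∫ ξ, Y n ξ ^ 2 ∂μ ≤ ∫ _, C ^ 2 ∂μ :=
            integral_mono hY2 (integrable_const _) fun ξ => by
              rw [← sq_abs]; exact pow_le_pow_left₀ (abs_nonneg _) (hbdd n ξ) 2
        _ = C ^ 2 := by simp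
    have hexpand : (fun ξ => (∑ t ∈ range (n + 1), Y t ξ) ^ 2) =
        fun ξ => (S ξ ^ 2 + 2 * (S ξ * Y n ξ)) + Y n ξ ^ 2 := by
      funext ξ; simp only [sum_range_succ, S]; ring
    have hS2 : Integrable (fun ξ => S ξ ^ 2) μ := integrable_sq_sum_range hYm hbdd n
    have hS2SY : Integrable (fun ξ => S ξ ^ 2 + 2 * (S ξ * Y n ξ)) μ :=
      hS2.add (hSY.const_mul 2)
    rw [hexpand, integral_add hS2SY hY2,
      integral_add hS2 (hSY.const_mul 2), integral_const_mul, hcross]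
    push_cast
    linarith

theorem ae_tendsto_sum_range_sq_div [IsProbabilityMeasure μ]
    (hY : ∀ t, Measurable[𝒢 (t + 1)] (Y t)) (hbdd : ∀ t ξ, |Y t ξ| ≤ C)
    (hc : ∀ t, μ[Y t | 𝒢 t] =ᵐ[μ] 0) :
    ∀ᵐ ξ ∂μ, Tendsto (fun k : ℕ => (∑ t ∈ range (k ^ 2), Y t ξ) / (k ^ 2 : ℕ)) atTop (𝓝 0) := by
  have hYm : ∀ t, Measurable (Y t) := fun t => (hY t).mono (𝒢.le _) le_rfl
  set Z : ℕ → Ξ → ℝ := fun k ξ => ((∑ t ∈ range (k ^ 2), Y t ξ) / (k ^ 2 : ℕ)) ^ 2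
  have hZint : ∀ k, Integrable (Z k) μ := fun k => by
    simpa only [Z, div_pow] using (integrable_sq_sum_range hYm hbdd (k ^ 2)).div_const _
  have hZle : ∀ k : ℕ, ∫ ξ, Z k ξ ∂μ ≤ C ^ 2 / (k : ℝ) ^ 2 := by
    intro k
    rcases Nat.eq_zero_or_pos k with rfl | hk
    · simp [Z]
    have h := integral_sq_sum_range_le hY hbdd hc (k ^ 2)
    simp only [Z, div_pow, integral_div]
    rw [div_le_div_iff₀ (by positivity) (by positivity)]
    push_cast at h ⊢
    nlinarith [sq_nonneg (k : ℝ)]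
  have hsum : Summable fun k => ∫ ξ, Z k ξ ∂μ :=
    .of_nonneg_of_le (fun k => integral_nonneg fun ξ => sq_nonneg _) hZle <| by
      simpa [div_eq_mul_inv] using (Real.summable_nat_pow_inv.2 one_lt_two).mul_left (C ^ 2)
  filter_upwards [ae_tendsto_zero_of_summable_integral (fun k ξ => sq_nonneg _) hZint hsum]
    with ξ hξ
  refine tendsto_zero_iff_abs_tendsto_zero _ |>.2 ?_
  simpa [Function.comp_def, Z, Real.sqrt_sq_eq_abs] using hξ.sqrt

theorem ae_tendsto_sum_range_div_of_condExp_eq_zero [IsProbabilityMeasure μ]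
    (hY : ∀ t, Measurable[𝒢 (t + 1)] (Y t)) (hbdd : ∀ t ξ, |Y t ξ| ≤ C)
    (hc : ∀ t, μ[Y t | 𝒢 t] =ᵐ[μ] 0) :
    ∀ᵐ ξ ∂μ, Tendsto (fun n : ℕ => (∑ t ∈ range n, Y t ξ) / n) atTop (𝓝 0) := by
  filter_upwards [ae_tendsto_sum_range_sq_div hY hbdd hc] with ξ hξ
  exact tendsto_sum_range_div_of_tendsto_sq (fun t => hbdd t ξ) hξ

end MartingaleDifference

theorem norm_diracVec (ω : Ω) : ‖diracVec ω‖ = 1 := by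
  have h : diracVec ω = EuclideanSpace.single ω (1 : ℝ) := by ext a; simp [diracVec]
  simp [h]

-- The set `N_T[q]` of the paper, with times indexed from `0`.
def visits {β : Type*} [DecidableEq β] (g : ℕ → β) (q : β) (T : ℕ) : Finset ℕ :=
  (range T).filter fun t => g t = q

section Deterministic

variable {E ι : Type*} [NormedAddCommGroup E] [NormedSpace ℝ E]

theorem card_div_mul_norm_inv_smul_sum_sub (s : Finset ι) (v : ι → E) (q : E) {T : ℝ}
    (hT : 0 ≤ T) :
    (#s / T) * ‖(#s : ℝ)⁻¹ • ∑ t ∈ s, v t - q‖ = ‖T⁻¹ • ∑ t ∈ s, (v t - q)‖ := by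
  rcases s.eq_empty_or_nonempty with rfl | hs
  · simp
  have hn : (#s : ℝ) ≠ 0 := by exact_mod_cast hs.card_ne_zero
  have hsum : ∑ t ∈ s, (v t - q) = (#s : ℝ) • ((#s : ℝ)⁻¹ • ∑ t ∈ s, v t - q) := by
    rw [sum_sub_distrib, sum_const, smul_sub, smul_inv_smul₀ hn, Nat.cast_smul_eq_nsmul]
  rw [hsum, smul_smul, norm_smul, Real.norm_of_nonneg (by positivity), div_eq_inv_mul]

theorem card_div_mul_norm_sub_le (s : Finset ι) (v : ι → E) (p q : E) (T : ℝ) :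
    (#s / T) * ‖q - p‖ ≤ ‖T⁻¹ • ∑ t ∈ s, (v t - q)‖ + ‖T⁻¹ • ∑ t ∈ s, (v t - p)‖ := by
  have hdiff : T⁻¹ • ∑ t ∈ s, (v t - p) - T⁻¹ • ∑ t ∈ s, (v t - q) = (#s / T) • (q - p) := by
    rw [← smul_sub, ← sum_sub_distrib]
    simp only [sub_sub_sub_cancel_left, sum_const]
    rw [← Nat.cast_smul_eq_nsmul ℝ, smul_smul, div_eq_inv_mul]
  calc (#s / T) * ‖q - p‖ ≤ ‖(#s / T) • (q - p)‖ := by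
        rw [norm_smul]; exact mul_le_mul_of_nonneg_right (le_abs_self _) (norm_nonneg _)
    _ ≤ _ := by rw [← hdiff, add_comm]; exact norm_sub_le _ _

theorem norm_inv_smul_sum_sub_le {v : ℕ → E} {B : ℝ} (hv : ∀ t, ‖v t‖ ≤ B) (q : E)
    {s : Finset ℕ} {T : ℕ} (hs : s ⊆ range T) :
    ‖(T : ℝ)⁻¹ • ∑ t ∈ s, (v t - q)‖ ≤ B + ‖q‖ := by
  have hBq : 0 ≤ B + ‖q‖ := add_nonneg ((norm_nonneg _).trans (hv 0)) (norm_nonneg _)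
  have hsT : (#s : ℝ) ≤ T := by simpa using card_le_card hs
  calc ‖(T : ℝ)⁻¹ • ∑ t ∈ s, (v t - q)‖ ≤ (T : ℝ)⁻¹ * (#s * (B + ‖q‖)) := by
        rw [norm_smul, norm_inv, Real.norm_natCast]
        gcongr
        exact (norm_sum_le_of_le s fun t _ => (norm_sub_le _ _).trans (add_le_add (hv t) le_rfl))
          |>.trans_eq (by simp [mul_add])
    _ = ((T : ℝ)⁻¹ * #s) * (B + ‖q‖) := by ring
    _ ≤ B + ‖q‖ := mul_le_of_le_one_left hBq (inv_mul_le_one_of_le₀ hsT (Nat.cast_nonneg _))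

end Deterministic

theorem limsup_le_of_le_add_of_tendsto_zero {ι : Type*} {l : Filter ι} [l.NeBot]
    {a b c : ι → ℝ} {ε : ℝ} (ha : IsBoundedUnder (· ≥ ·) l a) (hb : IsBoundedUnder (· ≤ ·) l b)
    (hbε : limsup b l ≤ ε) (hc : Tendsto c l (𝓝 0)) (habc : ∀ i, a i ≤ b i + c i) :
    limsup a l ≤ ε := by
  refine le_of_forall_pos_le_add fun η hη => limsup_le_of_le ha.isCoboundedUnder_le ?_
  filter_upwards [eventually_lt_of_limsup_lt (hbε.trans_lt (by linarith : ε < ε + η / 2)) hb,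
    hc.eventually_lt_const (half_pos hη)] with i hbi hci
  linarith [habc i]

theorem limsup_card_visits_div_mul_norm_sub_le {E : Type*} [NormedAddCommGroup E]
    [NormedSpace ℝ E] [DecidableEq E] {v g : ℕ → E} {B : ℝ} (hv : ∀ t, ‖v t‖ ≤ B)
    {F : Finset E} {p q : E} (hq : q ∈ F) {ε : ℝ}
    (hcal : limsup (fun T : ℕ => ∑ q ∈ F, (#(visits g q T) / T : ℝ) *
      ‖(#(visits g q T) : ℝ)⁻¹ • ∑ t ∈ visits g q T, v t - q‖) atTop ≤ ε)
    (hlln : Tendsto (fun T : ℕ => (T : ℝ)⁻¹ • ∑ t ∈ visits g q T, (v t - p)) atTop (𝓝 0)) :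
    limsup (fun T : ℕ => (#(visits g q T) / T : ℝ) * ‖q - p‖) atTop ≤ ε := by
  simp only [card_div_mul_norm_inv_smul_sum_sub, Nat.cast_nonneg] at hcal
  refine limsup_le_of_le_add_of_tendsto_zero (isBoundedUnder_of ⟨0, fun T => by positivity⟩)
    (isBoundedUnder_of ⟨∑ q ∈ F, (B + ‖q‖), fun T => sum_le_sum fun q _ =>
      norm_inv_smul_sum_sub_le hv q (filter_subset _ _)⟩) hcal
    (by simpa only [norm_zero] using hlln.norm)
    fun T => (card_div_mul_norm_sub_le _ v p q _).trans (add_le_add ?_ le_rfl)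
  exact single_le_sum (f := fun q => ‖(T : ℝ)⁻¹ • ∑ t ∈ visits g q T, (v t - q)‖)
    (fun _ _ => norm_nonneg _) hq

theorem condExp_indicator_sub_const_eq_zero {Ξ : Type*} {m m0 : MeasurableSpace Ξ}
    {μ : Measure Ξ} [IsFiniteMeasure μ] (hm : m ≤ m0) {s : Set Ξ} (hs : MeasurableSet[m] s)
    {Z : Ξ → ℝ} {c : ℝ} (hZ : Integrable Z μ) (hZc : μ[Z | m] =ᵐ[μ] fun _ => c) :
    μ[s.indicator (fun ξ => Z ξ - c) | m] =ᵐ[μ] 0 := by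
  filter_upwards [condExp_indicator (hZ.sub (integrable_const c)) hs,
    condExp_sub hZ (integrable_const c) m, hZc] with ξ h1 h2 h3
  refine h1.trans ?_
  by_cases hξ : ξ ∈ s <;> simp [hξ, h2, h3, condExp_const hm]

theorem ae_tendsto_inv_smul_sum_visits_diracVec_sub {Ξ : Type*} {m0 : MeasurableSpace Ξ}
    {μ : Measure Ξ} [IsProbabilityMeasure μ] {𝒢 : Filtration ℕ m0}
    [MeasurableSpace Ω] [MeasurableSingletonClass Ω] {X : ℕ → Ξ → Ω}
    (hX : ∀ t, Measurable[𝒢 (t + 1)] (X t)) {p : EuclideanSpace ℝ Ω}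
    (hcond : ∀ t a, μ[(fun ξ => if X t ξ = a then (1 : ℝ) else 0) | 𝒢 t] =ᵐ[μ] fun _ => p a)
    {β : Type*} [MeasurableSpace β] [MeasurableSingletonClass β] [DecidableEq β]
    {g : ℕ → Ξ → β} (hg : ∀ t, Measurable[𝒢 t] (g t)) (q : β) :
    ∀ᵐ ξ ∂μ, Tendsto (fun T : ℕ => (T : ℝ)⁻¹ • ∑ t ∈ visits (g · ξ) q T, (diracVec (X t ξ) - p))
      atTop (𝓝 0) := by
  set Y : Ω → ℕ → Ξ → ℝ := fun a t =>
    {ξ | g t ξ = q}.indicator fun ξ => (if X t ξ = a then (1 : ℝ) else 0) - p a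
  have hind : ∀ t a, Measurable[𝒢 (t + 1)] fun ξ => if X t ξ = a then (1 : ℝ) else 0 :=
    fun t a => Measurable.ite (hX t (measurableSet_singleton a)) measurable_const measurable_const
  have hcoord : ∀ a, ∀ᵐ ξ ∂μ, Tendsto (fun T : ℕ => (∑ t ∈ range T, Y a t ξ) / T) atTop (𝓝 0) :=
    fun a => ae_tendsto_sum_range_div_of_condExp_eq_zero (C := 1 + |p a|)
      (fun t => ((hind t a).sub_const _).indicator (𝒢.mono t.le_succ _
        (hg t (measurableSet_singleton q))))
      (fun t ξ => calc
        |Y a t ξ| ≤ |(if X t ξ = a then (1 : ℝ) else 0) - p a| := by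
          by_cases h : g t ξ = q <;> simp [Y, h]
        _ ≤ |if X t ξ = a then (1 : ℝ) else 0| + |p a| := abs_sub _ _
        _ ≤ 1 + |p a| := by gcongr; split_ifs <;> simp)
      (fun t => condExp_indicator_sub_const_eq_zero (𝒢.le t) (hg t (measurableSet_singleton q))
        (integrable_of_abs_le ((hind t a).mono (𝒢.le _) le_rfl) (C := 1)
          fun ξ => by split_ifs <;> simp) (hcond t a))
  filter_upwards [ae_all_iff.2 hcoord] with ξ hξ
  have hvec : Tendsto (fun T : ℕ => WithLp.toLp 2 fun a => (∑ t ∈ range T, Y a t ξ) / T)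
      atTop (𝓝 (WithLp.toLp 2 0)) :=
    ((PiLp.continuous_toLp 2 _).tendsto _).comp (tendsto_pi_nhds.2 hξ)
  rw [WithLp.toLp_zero] at hvec
  refine hvec.congr fun T => ?_
  ext a
  rw [PiLp.toLp_apply, PiLp.smul_apply, WithLp.ofLp_sum, Finset.sum_apply, visits, sum_filter,
    smul_eq_mul, inv_mul_eq_div]
  congr 1
  refine sum_congr rfl fun t _ => ?_
  simp [Y, Set.indicator_apply, diracVec, eq_comm]

open Classical in
theorem iid_forces_forecast_near_p_general
    {Ξ : Type*} {m0 : MeasurableSpace Ξ} (ℙ : Measure Ξ) [IsProbabilityMeasure ℙ]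
    (𝒢 : Filtration ℕ m0)
    [MeasurableSpace Ω] [MeasurableSingletonClass Ω]
    (X : ℕ → Ξ → Ω) (hX : ∀ t, Measurable[𝒢 (t + 1)] (X t))
    (p : EuclideanSpace ℝ Ω)
    (hcond : ∀ t a,
      (ℙ[(fun ξ => if X t ξ = a then (1 : ℝ) else 0) | 𝒢 t]) =ᵐ[ℙ] fun _ => p a)
    (F : Finset (EuclideanSpace ℝ Ω))
    (f : ℕ → Ξ → EuclideanSpace ℝ Ω)
    (hf : ∀ t, Measurable[𝒢 t] (f t))
    (ε : ℝ)
    (hcal : ∀ᵐ ξ ∂ℙ,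
      limsup (fun T : ℕ => ∑ q ∈ F,
        ((((Finset.range T).filter fun t => f t ξ = q).card : ℝ) / T) *
          ‖((((Finset.range T).filter fun t => f t ξ = q).card : ℝ)⁻¹ •
              ∑ t ∈ (Finset.range T).filter fun t => f t ξ = q, diracVec (X t ξ)) - q‖)
        atTop ≤ ε) :
    ∀ᵐ ξ ∂ℙ, ∀ q ∈ F,
      limsup (fun T : ℕ =>
          ((((Finset.range T).filter fun t => f t ξ = q).card : ℝ) / T) * ‖q - p‖)
        atTop ≤ ε := by
  have hlln : ∀ q ∈ F, ∀ᵐ ξ ∂ℙ, Tendsto (fun T : ℕ =>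
      (T : ℝ)⁻¹ • ∑ t ∈ visits (f · ξ) q T, (diracVec (X t ξ) - p)) atTop (𝓝 0) :=
    fun q _ => ae_tendsto_inv_smul_sum_visits_diracVec_sub hX hcond hf q
  filter_upwards [hcal, (eventually_all_finset F).2 hlln] with ξ hcalξ hllnξ q hq
  exact limsup_card_visits_div_mul_norm_sub_le (fun t => (norm_diracVec (X t ξ)).le) hq hcalξ
    (hllnξ q hq)

open Classical in
/-- If the conditional law of the state is the constant `p` at every period and the play is
almost surely `ε`-calibrated, then almost surely every forecast `f ∈ F` satisfies
`limsup_T (|N_T[f]|/T) ‖f − p‖ ≤ ε`; in particular, every forecast at distance more than `ε`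
from `p` is used with asymptotic frequency zero. -/
theorem iid_forces_forecast_near_p
    {Ξ : Type*} {m0 : MeasurableSpace Ξ} (ℙ : Measure Ξ) [IsProbabilityMeasure ℙ]
    (𝒢 : Filtration ℕ m0) (h0 : 𝒢 0 = ⊥)
    [MeasurableSpace Ω] [MeasurableSingletonClass Ω]
    (X : ℕ → Ξ → Ω) (hX : ∀ t, Measurable[𝒢 (t + 1)] (X t))
    (p : EuclideanSpace ℝ Ω) (hp0 : ∀ a, 0 ≤ p a) (hp1 : ∑ a, p a = 1)
    (hcond : ∀ t a,
      (ℙ[(fun ξ => if X t ξ = a then (1 : ℝ) else 0) | 𝒢 t]) =ᵐ[ℙ] fun _ => p a)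
    (F : Finset (EuclideanSpace ℝ Ω))
    (f : ℕ → Ξ → EuclideanSpace ℝ Ω) (hfF : ∀ t ξ, f t ξ ∈ F)
    (hf : ∀ t, Measurable[𝒢 t] (f t))
    (ε : ℝ) (hε : 0 ≤ ε)
    (hcal : ∀ᵐ ξ ∂ℙ,
      limsup (fun T : ℕ => ∑ q ∈ F,
        ((((Finset.range T).filter fun t => f t ξ = q).card : ℝ) / T) *
          ‖((((Finset.range T).filter fun t => f t ξ = q).card : ℝ)⁻¹ •
              ∑ t ∈ (Finset.range T).filter fun t => f t ξ = q, diracVec (X t ξ)) - q‖)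
        atTop ≤ ε) :
    ∀ᵐ ξ ∂ℙ, ∀ q ∈ F,
      limsup (fun T : ℕ =>
          ((((Finset.range T).filter fun t => f t ξ = q).card : ℝ) / T) * ‖q - p‖)
        atTop ≤ ε :=
  iid_forces_forecast_near_p_general ℙ 𝒢 X hX p hcond F f hf ε hcal

end
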